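/- For N = 12 and d = 4, there exists a configuration of 12 unit vectors in ℝ⁴ (the vertices of the regular 24-cell, one from each antipodal pair) such that the matrix A = (h(q_1),…,h(q_{12}))ᵀ satisfies AᵀA = (12/24)·(1_4·1_4ᵀ + 2I), and hence C(A) = 1. Explicitly, one may take the 12 vectors with coordinates being all permutations of (±1/√2, ±1/√2, 0, 0) taken up to sign so that no two are antipodal. -/

import Mathlib

open Matrix

abbrev Idx (d : ℕ) : Type := Fin d ⊕ {p : Fin d × Fin d // p.1 < p.2}

noncomputable def hvec {d : ℕ} (q : Fin d → ℝ) : Idx d → ℝ :=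
  Sum.elim (fun i => q i ^ 2) (fun p => Real.sqrt 2 * (q p.1.1 * q p.1.2))

def oneVec (d : ℕ) : Idx d → ℝ := Sum.elim 1 0

noncomputable def Jmat (d : ℕ) : Matrix (Idx d) (Idx d) ℝ :=
  vecMulVec (oneVec d) (oneVec d)

noncomputable def Ccost {d N : ℕ} (A : Matrix (Fin N) (Idx d) ℝ) : ℝ :=
  ((N : ℝ) / (((d * (d + 1) / 2 : ℕ) : ℝ) * ((d : ℝ) * ((d : ℝ) + 2)))) *
    ((Aᵀ * A)⁻¹ * (Jmat d + (2 : ℝ) • (1 : Matrix (Idx d) (Idx d) ℝ))).trace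

/-- The 12 vertices of the 24-cell, one from each antipodal pair. -/
noncomputable def qcfg : Fin 12 → Fin 4 → ℝ := fun i =>
  let c := Real.sqrt 2 / 2
  ![![c,c,0,0], ![c,-c,0,0], ![c,0,c,0], ![c,0,-c,0], ![c,0,0,c], ![c,0,0,-c],
    ![0,c,c,0], ![0,c,-c,0], ![0,c,0,c], ![0,c,0,-c], ![0,0,c,c], ![0,0,c,-c]] i

lemma qcfg_norm : ∀ i, ∑ k, qcfg i k ^ 2 = 1 := by
  have hr : Real.sqrt 2 ^ 2 = 2 := Real.sq_sqrt (by norm_num)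
  intro i
  fin_cases i <;>
    · norm_num [qcfg, Fin.sum_univ_four, Matrix.cons_val_succ', Matrix.cons_val_zero', Matrix.cons_val_two, Matrix.vecHead, Matrix.vecTail, Matrix.cons_val_three]
      nlinarith [hr]

set_option maxHeartbeats 2000000 in
lemma qcfg_gram :
    (Matrix.of fun i => hvec (qcfg i))ᵀ * (Matrix.of fun i => hvec (qcfg i)) =
      ((12 : ℝ) / 24) • (Jmat 4 + (2 : ℝ) • (1 : Matrix (Idx 4) (Idx 4) ℝ)) := by
  have hr : Real.sqrt 2 ^ 2 = 2 := Real.sq_sqrt (by norm_num)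
  have hr4 : Real.sqrt 2 ^ 4 = 4 := by nlinarith [hr]
  have hr6 : Real.sqrt 2 ^ 6 = 8 := by nlinarith [hr, hr4]
  ext a b
  fin_cases a <;> fin_cases b <;>
  · simp only [Matrix.mul_apply, Matrix.transpose_apply, Matrix.of_apply, Fin.sum_univ_succ,
      Finset.sum_empty, Fin.sum_univ_zero, hvec, qcfg, Sum.elim_inl, Sum.elim_inr,
      Matrix.smul_apply, Matrix.add_apply, Matrix.one_apply, Jmat, vecMulVec_apply, oneVec,
      Matrix.cons_val_zero, Matrix.cons_val_succ, Fin.succ_zero_eq_one,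
      reduceCtorEq, if_false, Sum.inl.injEq, Sum.inr.injEq, Subtype.mk.injEq, Prod.mk.injEq,
      Fin.isValue]
    norm_num [Fin.ext_iff]
    try (ring_nf; linarith [hr, hr4, hr6])

lemma sumOne : ∑ c : Idx 4, oneVec 4 c * oneVec 4 c = 4 := by
  simp [Fintype.sum_sum_type, oneVec]

lemma JJ : Jmat 4 * Jmat 4 = (4 : ℝ) • Jmat 4 := by
  ext a b
  simp only [Jmat, Matrix.mul_apply, vecMulVec_apply, Matrix.smul_apply, smul_eq_mul]
  calc ∑ c, oneVec 4 a * oneVec 4 c * (oneVec 4 c * oneVec 4 b)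
      = (∑ c : Idx 4, oneVec 4 c * oneVec 4 c) * (oneVec 4 a * oneVec 4 b) := by
        rw [Finset.sum_mul]; exact Finset.sum_congr rfl fun c _ => by ring
    _ = 4 * (oneVec 4 a * oneVec 4 b) := by rw [sumOne]

lemma cardIdx : Fintype.card (Idx 4) = 10 := by decide

lemma rightInv :
    (((12 : ℝ) / 24) • (Jmat 4 + (2 : ℝ) • (1 : Matrix (Idx 4) (Idx 4) ℝ))) *
      (-(1/6 : ℝ) • Jmat 4 + 1) = 1 := by
  simp only [Matrix.smul_mul, Matrix.mul_smul, Matrix.add_mul, Matrix.mul_add,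
    Matrix.mul_one, Matrix.one_mul, JJ, smul_smul, smul_add]
  module

/-- For N = 12 and d = 4 there exists a configuration of 12 unit vectors in ℝ⁴
(vertices of the regular 24-cell, one from each antipodal pair) such that
AᵀA = (12/24)(1₄1₄ᵀ + 2I) and hence C(A) = 1. -/
theorem stmt_19 :
    ∃ q : Fin 12 → Fin 4 → ℝ, (∀ i, ∑ k, q i k ^ 2 = 1) ∧
      (Matrix.of fun i => hvec (q i))ᵀ * (Matrix.of fun i => hvec (q i)) =
        ((12 : ℝ) / 24) • (Jmat 4 + (2 : ℝ) • (1 : Matrix (Idx 4) (Idx 4) ℝ)) ∧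
      Ccost (Matrix.of fun i => hvec (q i)) = 1 := by
  refine ⟨qcfg, qcfg_norm, qcfg_gram, ?_⟩
  set A := (Matrix.of fun i => hvec (qcfg i)) with hA
  have hG : Aᵀ * A = ((12 : ℝ) / 24) • (Jmat 4 + (2 : ℝ) • (1 : Matrix (Idx 4) (Idx 4) ℝ)) :=
    qcfg_gram
  have hRI : (Aᵀ * A) * (-(1/6 : ℝ) • Jmat 4 + 1) = 1 := by rw [hG]; exact rightInv
  have hInv : Invertible (Aᵀ * A) := invertibleOfRightInverse _ _ hRI
  have hIsUnit : IsUnit (Aᵀ * A).det := (Matrix.isUnit_iff_isUnit_det _).mp (isUnit_of_invertible _)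
  have hM : Jmat 4 + (2 : ℝ) • (1 : Matrix (Idx 4) (Idx 4) ℝ) =
      (2 : ℝ) • (((12 : ℝ) / 24) • (Jmat 4 + (2 : ℝ) • (1 : Matrix (Idx 4) (Idx 4) ℝ))) := by
    rw [smul_smul]; norm_num
  have htr : ((Aᵀ * A)⁻¹ * (Jmat 4 + (2 : ℝ) • (1 : Matrix (Idx 4) (Idx 4) ℝ))).trace = 20 := by
    rw [hM, ← hG, Matrix.mul_smul, Matrix.nonsing_inv_mul _ hIsUnit, Matrix.trace_smul,
      Matrix.trace_one, cardIdx]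
    norm_num
  rw [Ccost, htr]
  norm_num
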